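/- (Pólya–Szegő inequality, additive form) Let a₁,…,aₙ and b₁,…,bₙ be positive real numbers with 0 < a ≤ aᵢ ≤ A < ∞ and 0 < b ≤ bᵢ ≤ B < ∞ for all 1 ≤ i ≤ n. Then (∑_{i=1}^n aᵢ²)(∑_{i=1}^n bᵢ²) − (∑_{i=1}^n aᵢbᵢ)² ≤ ((AB − ab)²/(4abAB)) (∑_{i=1}^n aᵢbᵢ)². -/

import Mathlib

/-!
Each pair `(x, y) = (aᵢ, bᵢ)` satisfies `(B x - a y) (A y - b x) ≥ 0`, i.e.
`b B x² + a A y² ≤ (A B + a b) x y`. Summing and applying AM-GM to the left-hand side,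
`4 a b A B (∑ aᵢ²)(∑ bᵢ²) ≤ (b B ∑ aᵢ² + a A ∑ bᵢ²)² ≤ (A B + a b)² (∑ aᵢ bᵢ)²`,
and `(A B + a b)² - 4 a b A B = (A B - a b)²`.
-/

open Finset

theorem mul_sq_add_mul_sq_le_of_mem_Icc {a A b B x y : ℝ} (ha : 0 ≤ a) (hb : 0 ≤ b)
    (hx : x ∈ Set.Icc a A) (hy : y ∈ Set.Icc b B) :
    b * B * x ^ 2 + a * A * y ^ 2 ≤ (A * B + a * b) * (x * y) := by
  obtain ⟨hax, hxA⟩ := hx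
  obtain ⟨hby, hyB⟩ := hy
  have hx0 : 0 ≤ x := ha.trans hax
  have hy0 : 0 ≤ y := hb.trans hby
  have h₁ : a * y ≤ B * x := calc
    a * y ≤ x * y := by gcongr
    _ ≤ x * B := by gcongr
    _ = B * x := mul_comm x B
  have h₂ : b * x ≤ A * y := calc
    b * x ≤ y * x := by gcongr
    _ ≤ y * A := by gcongr
    _ = A * y := mul_comm y A
  nlinarith [mul_nonneg (sub_nonneg.2 h₁) (sub_nonneg.2 h₂)]

theorem mul_sum_sq_add_mul_sum_sq_le {ι : Type*} (s : Finset ι) (x y : ι → ℝ)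
    {a A b B : ℝ} (ha : 0 ≤ a) (hb : 0 ≤ b)
    (hx : ∀ i ∈ s, x i ∈ Set.Icc a A) (hy : ∀ i ∈ s, y i ∈ Set.Icc b B) :
    b * B * ∑ i ∈ s, x i ^ 2 + a * A * ∑ i ∈ s, y i ^ 2
      ≤ (A * B + a * b) * ∑ i ∈ s, x i * y i := by
  simp only [mul_sum, ← sum_add_distrib]
  exact sum_le_sum fun i hi => mul_sq_add_mul_sq_le_of_mem_Icc ha hb (hx i hi) (hy i hi)

theorem polya_szego_mul {ι : Type*} (s : Finset ι) (x y : ι → ℝ)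
    {a A b B : ℝ} (ha : 0 ≤ a) (hb : 0 ≤ b) (hA : 0 ≤ A) (hB : 0 ≤ B)
    (hx : ∀ i ∈ s, x i ∈ Set.Icc a A) (hy : ∀ i ∈ s, y i ∈ Set.Icc b B) :
    4 * a * b * A * B * ((∑ i ∈ s, x i ^ 2) * ∑ i ∈ s, y i ^ 2)
      ≤ (A * B + a * b) ^ 2 * (∑ i ∈ s, x i * y i) ^ 2 := by
  set Sx := ∑ i ∈ s, x i ^ 2
  set Sy := ∑ i ∈ s, y i ^ 2
  have hSx : 0 ≤ Sx := sum_nonneg fun i _ => sq_nonneg (x i)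
  have hSy : 0 ≤ Sy := sum_nonneg fun i _ => sq_nonneg (y i)
  calc 4 * a * b * A * B * (Sx * Sy)
      = 4 * (b * B * Sx) * (a * A * Sy) := by ring
    _ ≤ (b * B * Sx + a * A * Sy) ^ 2 := four_mul_le_sq_add _ _
    _ ≤ ((A * B + a * b) * ∑ i ∈ s, x i * y i) ^ 2 := by
      gcongr
      exact mul_sum_sq_add_mul_sum_sq_le s x y ha hb hx hy
    _ = (A * B + a * b) ^ 2 * (∑ i ∈ s, x i * y i) ^ 2 := mul_pow _ _ _

/-- **Pólya–Szegő inequality**, additive form. -/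
theorem polya_szego_additive
    (n : ℕ) (hn : 0 < n) (a A b B : ℝ) (ha : 0 < a) (hb : 0 < b)
    (av bv : Fin n → ℝ)
    (haA : ∀ i, a ≤ av i ∧ av i ≤ A) (hbB : ∀ i, b ≤ bv i ∧ bv i ≤ B) :
    (∑ i, (av i) ^ 2) * (∑ i, (bv i) ^ 2) - (∑ i, av i * bv i) ^ 2
      ≤ (A * B - a * b) ^ 2 / (4 * a * b * A * B) * (∑ i, av i * bv i) ^ 2 := by
  have i₀ : Fin n := ⟨0, hn⟩
  have hA : 0 < A := ha.trans_le ((haA i₀).1.trans (haA i₀).2)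
  have hB : 0 < B := hb.trans_le ((hbB i₀).1.trans (hbB i₀).2)
  have hmul := polya_szego_mul univ av bv ha.le hb.le hA.le hB.le
    (fun i _ => haA i) (fun i _ => hbB i)
  rw [div_mul_eq_mul_div, le_div_iff₀ (by positivity)]
  linear_combination hmul
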